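/- arXiv:2207.04401 — 7 statements merged into one kernel-verified Lean document; each statement's English description precedes it below -/
import Mathlib

section
/- Let X be a locally finite metric space (i.e., all balls of finite radius contain finitely many points). Suppose (f_i) is a sequence of (K,A)-quasi-isometries of X such that {f_i(x₀) : i ∈ ℕ} is bounded for some x₀ ∈ X. Then there exists a (K,A)-quasi-isometry f : X → X and a subsequence (f_{n_i}) such that for every x ∈ X, f_{n_i}(x) = f(x) for all sufficiently large i. -/
/-- A sequence with finite range has a value attained infinitely often. -/
lemma exists_infinite_fiber_of_finite_range {α : Type*} (a : ℕ → α)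
    (h : (Set.range a).Finite) : ∃ v, {i | a i = v}.Infinite := by
  have := h.to_subtype
  obtain ⟨y, hy⟩ := Finite.exists_infinite_fiber (Set.rangeFactorization a)
  refine ⟨y.1, ?_⟩
  rw [← Set.infinite_coe_iff]
  have : {i | a i = y.1} = Set.rangeFactorization a ⁻¹' {y} := by
    ext i
    simp [Set.rangeFactorization, Subtype.ext_iff]
  rw [this]
  exact hy

/-- Extract a constant subsequence from a sequence with finite range. -/
lemma exists_const_subseq {α : Type*} (a : ℕ → α) (h : (Set.range a).Finite) :
    ∃ ψ : ℕ → ℕ, StrictMono ψ ∧ ∃ v, ∀ i, a (ψ i) = v := by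
  obtain ⟨v, hv⟩ := exists_infinite_fiber_of_finite_range a h
  obtain ⟨ψ, hψ, hc⟩ := Filter.extraction_of_frequently_atTop
    (Nat.frequently_atTop_iff_infinite.2 hv)
  exact ⟨ψ, hψ, v, hc⟩

/-- Diagonal extraction: a double sequence with pointwise finite range has a
subsequence which is pointwise eventually constant. -/
lemma exists_diagonal {α : Type*} (a : ℕ → ℕ → α)
    (hfin : ∀ k, (Set.range fun i => a i k).Finite) :
    ∃ n : ℕ → ℕ, StrictMono n ∧ ∀ k, ∃ c, ∀ i, k ≤ i → a (n i) k = c := by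
  have key : ∀ (φ : {φ : ℕ → ℕ // StrictMono φ}) (k : ℕ),
      ∃ ψ : ℕ → ℕ, StrictMono ψ ∧ ∃ v, ∀ i, a (φ.1 (ψ i)) k = v := by
    intro φ k
    exact exists_const_subseq (fun i => a (φ.1 i) k)
      ((hfin k).subset (Set.range_comp_subset_range φ.1 (fun i => a i k)))
  choose ψ hψmono v hv using key
  set Φ : ℕ → {φ : ℕ → ℕ // StrictMono φ} :=
    fun k => Nat.rec ⟨id, strictMono_id⟩
      (fun m ih => ⟨ih.1 ∘ ψ ih m, ih.2.comp (hψmono ih m)⟩) k with hΦ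
  have hΦsucc : ∀ m, (Φ (m + 1)).1 = (Φ m).1 ∘ ψ (Φ m) m := fun m => rfl
  have stable : ∀ m k, k < m → ∀ i, a ((Φ m).1 i) k = v (Φ k) k := by
    intro m
    induction m with
    | zero => intro k hk; omega
    | succ m ih =>
      intro k hk i
      rw [hΦsucc m]
      rcases Nat.lt_succ_iff_lt_or_eq.mp hk with h | h
      · exact ih k h _
      · subst h; exact hv (Φ k) k i
  refine ⟨fun i => (Φ (i + 1)).1 i, ?_, ?_⟩
  · apply strictMono_nat_of_lt_succ
    intro i
    calc (Φ (i + 1)).1 i < (Φ (i + 1)).1 (i + 1) := (Φ (i + 1)).2 (Nat.lt_succ_self i)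
      _ ≤ (Φ (i + 1)).1 (ψ (Φ (i + 1)) (i + 1) (i + 1)) :=
          (Φ (i + 1)).2.monotone ((hψmono (Φ (i + 1)) (i + 1)).le_apply)
      _ = (Φ (i + 2)).1 (i + 1) := by rw [hΦsucc (i + 1)]; rfl
  · intro k
    exact ⟨v (Φ k) k, fun i hi => stable (i + 1) k (Nat.lt_succ_of_le hi) i⟩

/-- `f : X → Y` is a `(K,A)`-quasi-isometry. -/
def IsQuasiIsometry {X Y : Type*} [PseudoMetricSpace X] [PseudoMetricSpace Y]
    (K A : ℝ) (f : X → Y) : Prop :=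
  (∀ x x' : X, dist x x' / K - A ≤ dist (f x) (f x') ∧
      dist (f x) (f x') ≤ K * dist x x' + A) ∧
    ∀ y : Y, ∃ x : X, dist y (f x) ≤ A

/-- Coarse Arzelà–Ascoli theorem for locally finite metric spaces. -/
theorem coarse_arzela_ascoli {X : Type*} [MetricSpace X]
    (hX : ∀ (x : X) (r : ℝ), (Metric.closedBall x r).Finite)
    (K A : ℝ) (f : ℕ → X → X) (hf : ∀ i : ℕ, IsQuasiIsometry K A (f i))
    (x₀ : X) (hb : Bornology.IsBounded (Set.range fun i : ℕ => f i x₀)) :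
    ∃ (g : X → X) (n : ℕ → ℕ), IsQuasiIsometry K A g ∧ StrictMono n ∧
      ∀ x : X, ∃ N : ℕ, ∀ i ≥ N, f (n i) x = g x := by
  -- X is countable
  have hcount : Countable X := by
    rw [← Set.countable_univ_iff]
    have hsub : (Set.univ : Set X) ⊆ ⋃ m : ℕ, Metric.closedBall x₀ m := by
      intro x _
      exact Set.mem_iUnion.2 ⟨⌈dist x x₀⌉₊, Metric.mem_closedBall.2 (Nat.le_ceil _)⟩
    exact (Set.countable_iUnion fun m : ℕ => (hX x₀ m).countable).mono hsub
  have : Nonempty X := ⟨x₀⟩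
  obtain ⟨e, he⟩ := exists_surjective_nat X
  -- a uniform bound on dist (f i x₀) x₀
  obtain ⟨C, hC⟩ := Metric.isBounded_iff.1 hb
  have hC0 : ∀ i, dist (f i x₀) x₀ ≤ C + dist (f 0 x₀) x₀ := by
    intro i
    calc dist (f i x₀) x₀ ≤ dist (f i x₀) (f 0 x₀) + dist (f 0 x₀) x₀ := dist_triangle _ _ _
      _ ≤ C + dist (f 0 x₀) x₀ := by
          gcongr; exact hC (Set.mem_range_self i) (Set.mem_range_self 0)
  -- pointwise finite range
  have hfin : ∀ x : X, (Set.range fun i => f i x).Finite := by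
    intro x
    apply (hX x₀ (K * dist x x₀ + A + (C + dist (f 0 x₀) x₀))).subset
    rintro _ ⟨i, rfl⟩
    rw [Metric.mem_closedBall]
    calc dist (f i x) x₀ ≤ dist (f i x) (f i x₀) + dist (f i x₀) x₀ := dist_triangle _ _ _
      _ ≤ (K * dist x x₀ + A) + (C + dist (f 0 x₀) x₀) := by
          gcongr
          · exact ((hf i).1 x x₀).2
          · exact hC0 i
  -- diagonal extraction
  obtain ⟨n, hn, hcst⟩ := exists_diagonal (fun i k => f i (e k)) (fun k => hfin (e k))
  choose c hc using hcst
  choose idx hidx using he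
  set g : X → X := fun x => c (idx x) with hg
  have hev : ∀ x : X, ∀ i, idx x ≤ i → f (n i) x = g x := by
    intro x i hi
    have := hc (idx x) i hi
    rwa [hidx x] at this
  refine ⟨g, n, ⟨?_, ?_⟩, hn, fun x => ⟨idx x, fun i hi => hev x i hi⟩⟩
  · -- the two QI inequalities
    intro x x'
    have h1 := hev x (max (idx x) (idx x')) (le_max_left _ _)
    have h2 := hev x' (max (idx x) (idx x')) (le_max_right _ _)
    rw [← h1, ← h2]
    exact (hf (n (max (idx x) (idx x')))).1 x x'
  · -- coarse surjectivity
    intro y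
    choose z hz using fun i => (hf (n i)).2 y
    -- the z i lie in a finite set
    have hzfin : (Set.range z).Finite := by
      rcases lt_or_ge 0 K with hK | hK
      · -- K > 0 : z i in a ball around x₀
        apply (hX x₀ (K * (A + (A + dist y x₀ + (C + dist (f 0 x₀) x₀))))).subset
        rintro _ ⟨i, rfl⟩
        rw [Metric.mem_closedBall]
        have hlow := ((hf (n i)).1 (z i) x₀).1
        have hdd : dist (f (n i) (z i)) (f (n i) x₀) ≤ A + dist y x₀ + (C + dist (f 0 x₀) x₀) := by
          calc dist (f (n i) (z i)) (f (n i) x₀)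
              ≤ dist (f (n i) (z i)) y + dist y x₀ + dist x₀ (f (n i) x₀) :=
                dist_triangle4 _ _ _ _
            _ ≤ A + dist y x₀ + (C + dist (f 0 x₀) x₀) := by
                gcongr
                · rw [dist_comm]; exact hz i
                · rw [dist_comm]; exact hC0 (n i)
        have : dist (z i) x₀ / K ≤ A + (A + dist y x₀ + (C + dist (f 0 x₀) x₀)) := by
          linarith
        calc dist (z i) x₀ = dist (z i) x₀ / K * K := by field_simp
          _ ≤ (A + (A + dist y x₀ + (C + dist (f 0 x₀) x₀))) * K := by
              exact mul_le_mul_of_nonneg_right this hK.le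
          _ = K * (A + (A + dist y x₀ + (C + dist (f 0 x₀) x₀))) := mul_comm _ _
      · -- K ≤ 0 : X itself is finite
        have hXfin : (Set.univ : Set X).Finite := by
          apply (hX x₀ (A + A + dist (f 0 x₀) x₀)).subset
          intro x _
          rw [Metric.mem_closedBall]
          obtain ⟨w, hw⟩ := (hf 0).2 x
          have h1 : dist (f 0 w) (f 0 x₀) ≤ A := by
            have := ((hf 0).1 w x₀).2
            nlinarith [(dist_nonneg : (0:ℝ) ≤ dist w x₀)]
          calc dist x x₀ ≤ dist x (f 0 w) + dist (f 0 w) (f 0 x₀) + dist (f 0 x₀) x₀ :=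
                dist_triangle4 _ _ _ _
            _ ≤ A + A + dist (f 0 x₀) x₀ := by gcongr
        exact hXfin.subset (Set.subset_univ _)
    -- pigeonhole: some x is hit infinitely often
    obtain ⟨x, hx⟩ := exists_infinite_fiber_of_finite_range z hzfin
    obtain ⟨i, hiz, hik⟩ := hx.exists_gt (idx x)
    refine ⟨x, ?_⟩
    have : f (n i) x = g x := hev x i hik.le
    rw [← this, ← hiz]
    exact hz i
end

section
/- Let G be a quasi-action on a metric space X (with constants K,A) and let H ≤ G be a coarse stabiliser of the quasi-action. Then a subgroup H' ≤ G is a coarse stabiliser of the quasi-action if and only if H and H' are commensurable. -/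
open scoped Pointwise
/-- A `(K,A)`-quasi-action of a group `G` on a metric space `X`. -/
def IsQuasiAction {G X : Type*} [Group G] [PseudoMetricSpace X]
    (K A : ℝ) (φ : G → X → X) : Prop :=
  (∀ g : G, IsQuasiIsometry K A (φ g)) ∧
    (∀ g h : G, ∀ x : X, dist (φ h (φ g x)) (φ (h * g) x) ≤ A) ∧
    ∀ x : X, dist (φ (1 : G) x) x ≤ A

/-- A subset `T ⊆ G` is bounded for the quasi-action `φ` if its quasi-orbits
are bounded. -/
def QABounded {G X : Type*} [Group G] [PseudoMetricSpace X]
    (φ : G → X → X) (T : Set G) : Prop :=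
  ∀ x₀ : X, Bornology.IsBounded ((fun t => φ t x₀) '' T)

/-- `H ≤ G` is a coarse stabiliser of the quasi-action `φ` if `H` is bounded
and every bounded subset of `G` is contained in finitely many left `H`-cosets. -/
def IsCoarseStabiliser {G X : Type*} [Group G] [PseudoMetricSpace X]
    (φ : G → X → X) (H : Subgroup G) : Prop :=
  QABounded φ (H : Set G) ∧
    ∀ T : Set G, QABounded φ T → ∃ F : Finset G, T ⊆ (F : Set G) * (H : Set G)

section Aux

variable {G X : Type*} [Group G] [PseudoMetricSpace X]

lemma qaBounded_mono {φ : G → X → X} {S T : Set G} (hT : QABounded φ T) (hS : S ⊆ T) :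
    QABounded φ S := fun x₀ => (hT x₀).subset (Set.image_mono hS)

lemma qaBounded_mul_left {K A : ℝ} {φ : G → X → X} (hφ : IsQuasiAction K A φ)
    (F : Finset G) {T : Set G} (hT : QABounded φ T) : QABounded φ ((F : Set G) * T) := by
  intro x₀
  obtain ⟨r, hr⟩ := (Metric.isBounded_iff_subset_closedBall x₀).1 (hT x₀)
  have hbd : ((fun t => φ t x₀) '' ((F : Set G) * T)) ⊆
      ⋃ f ∈ (F : Set G), Metric.closedBall (φ f x₀) (|K| * r + A + A) := by
    rintro y ⟨g, hg, rfl⟩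
    obtain ⟨f, hf, t, ht, rfl⟩ := hg
    refine Set.mem_biUnion hf ?_
    have h1 : dist (φ (f * t) x₀) (φ f (φ t x₀)) ≤ A := by
      have := hφ.2.1 t f x₀
      simpa [dist_comm] using this
    have h2 : dist (φ f (φ t x₀)) (φ f x₀) ≤ K * dist (φ t x₀) x₀ + A :=
      ((hφ.1 f).1 (φ t x₀) x₀).2
    have hrt : dist (φ t x₀) x₀ ≤ r := by
      have := hr ⟨t, ht, rfl⟩
      simpa [Metric.mem_closedBall] using this
    have h3 : K * dist (φ t x₀) x₀ ≤ |K| * r := by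
      calc K * dist (φ t x₀) x₀ ≤ |K| * dist (φ t x₀) x₀ :=
            mul_le_mul_of_nonneg_right (le_abs_self K) dist_nonneg
        _ ≤ |K| * r := mul_le_mul_of_nonneg_left hrt (abs_nonneg K)
    have h4 : dist (φ (f * t) x₀) (φ f x₀) ≤ |K| * r + A + A := by
      have := dist_triangle (φ (f * t) x₀) (φ f (φ t x₀)) (φ f x₀)
      linarith
    simpa [Metric.mem_closedBall] using h4
  exact ((Bornology.isBounded_biUnion F.finite_toSet).2
    (fun f _ => Metric.isBounded_closedBall)).subset hbd

variable {H H' : Subgroup G}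

lemma relindex_ne_zero_of_cover (F : Finset G)
    (hc : (H : Set G) ⊆ (F : Set G) * (H' : Set G)) : H'.relIndex H ≠ 0 := by
  classical
  rw [Subgroup.relIndex]
  have hne : ∀ q : H ⧸ H'.subgroupOf H, ∃ f ∈ F, ∃ h' ∈ H', f * h' = ((q.out : H) : G) := by
    intro q
    exact Set.mem_mul.1 (hc (q.out : H).2)
  choose τ hτF a ha hfa using hne
  have hinj : Function.Injective (fun q => (⟨τ q, hτF q⟩ : {x // x ∈ F})) := by
    intro q₁ q₂ hq'
    have hq : τ q₁ = τ q₂ := congrArg Subtype.val hq'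
    have h1 : ((q₁.out : H) : G) = τ q₁ * a q₁ := (hfa q₁).symm
    have h2 : ((q₂.out : H) : G) = τ q₂ * a q₂ := (hfa q₂).symm
    have key : (q₁.out : H)⁻¹ * q₂.out ∈ H'.subgroupOf H := by
      rw [Subgroup.mem_subgroupOf]
      have : ((q₁.out : H)⁻¹ * q₂.out : H) = ((a q₁)⁻¹ * a q₂ : G) := by
        push_cast
        rw [h1, h2, hq]
        group
      rw [this]
      exact mul_mem (inv_mem (ha q₁)) (ha q₂)
    have := QuotientGroup.eq.2 key
    rwa [QuotientGroup.out_eq', QuotientGroup.out_eq'] at this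
  have : Finite (H ⧸ H'.subgroupOf H) := Finite.of_injective _ hinj
  exact Subgroup.index_ne_zero_of_finite

lemma cover_of_relindex_ne_zero (h : H'.relIndex H ≠ 0) :
    ∃ F : Finset G, (H : Set G) ⊆ (F : Set G) * (H' : Set G) := by
  classical
  rw [Subgroup.relIndex, Subgroup.index] at h
  have : Finite (H ⧸ H'.subgroupOf H) := Nat.finite_of_card_ne_zero h
  have hfin : (Set.range fun q : H ⧸ H'.subgroupOf H => ((q.out : H) : G)).Finite :=
    Set.finite_range _
  refine ⟨hfin.toFinset, ?_⟩
  intro x hx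
  set q : H ⧸ H'.subgroupOf H := QuotientGroup.mk ⟨x, hx⟩ with hq
  have hmem : (q.out : H)⁻¹ * ⟨x, hx⟩ ∈ H'.subgroupOf H := by
    rw [← QuotientGroup.eq, QuotientGroup.out_eq']
  rw [Subgroup.mem_subgroupOf] at hmem
  refine Set.mem_mul.2 ⟨((q.out : H) : G), ?_, ((q.out : H)⁻¹ * ⟨x, hx⟩ : H), hmem, ?_⟩
  · simp [hfin]
  · push_cast
    group

end Aux

theorem coarseStabiliser_iff_commensurable {G X : Type*} [Group G] [MetricSpace X]
    (K A : ℝ) (φ : G → X → X) (hφ : IsQuasiAction K A φ)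
    (H : Subgroup G) (hH : IsCoarseStabiliser φ H) (H' : Subgroup G) :
    IsCoarseStabiliser φ H' ↔ Subgroup.Commensurable H H' := by
  classical
  constructor
  · rintro ⟨hb', hcov'⟩
    obtain ⟨F₁, hF₁⟩ := hcov' (H : Set G) hH.1
    obtain ⟨F₂, hF₂⟩ := hH.2 (H' : Set G) hb'
    exact ⟨relindex_ne_zero_of_cover F₂ hF₂, relindex_ne_zero_of_cover F₁ hF₁⟩
  · rintro ⟨h1, h2⟩
    -- h1 : H.relindex H' ≠ 0, h2 : H'.relindex H ≠ 0
    obtain ⟨F₁, hF₁⟩ := cover_of_relindex_ne_zero h1  -- H' ⊆ F₁ * H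
    obtain ⟨F₂, hF₂⟩ := cover_of_relindex_ne_zero h2  -- H ⊆ F₂ * H'
    constructor
    · exact qaBounded_mono (qaBounded_mul_left hφ F₁ hH.1) hF₁
    · intro T hT
      obtain ⟨F, hF⟩ := hH.2 T hT
      refine ⟨F * F₂, ?_⟩
      calc T ⊆ (F : Set G) * (H : Set G) := hF
        _ ⊆ (F : Set G) * ((F₂ : Set G) * (H' : Set G)) :=
            Set.mul_subset_mul_left hF₂
        _ = ((F * F₂ : Finset G) : Set G) * (H' : Set G) := by
            rw [Finset.coe_mul, mul_assoc]
end

section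
/- If H ≤ G is a coarse stabiliser of a quasi-action of G on a metric space X, then H is commensurated in G: for every g ∈ G, gHg⁻¹ is commensurable to H. -/
open scoped Pointwise

/-! A quasi-action moves bounded sets of `G` to bounded sets under left and right translation,
so every conjugate `gHg⁻¹` of the bounded subgroup `H` is bounded. Being a coarse stabiliser,
`H` then covers `gHg⁻¹` by finitely many cosets, i.e. `H ⊓ gHg⁻¹` has finite index in `gHg⁻¹`.
Applying this to `g⁻¹` and conjugating back by `g` gives finite index in `H` as well. -/

namespace Subgroup

variable {G : Type*} [Group G]

theorem relIndex_ne_zero_of_subset_mul {H K : Subgroup G} {F : Set G} (hF : F.Finite)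
    (hK : (K : Set G) ⊆ F * H) : H.relIndex K ≠ 0 := by
  let f : K ⧸ H.subgroupOf K → G ⧸ H :=
    Quotient.map' Subtype.val fun _ _ hab => by
      rwa [QuotientGroup.leftRel_apply] at hab ⊢
  have hf : Function.Injective f := by
    refine Quotient.ind₂' fun a b hab => Quotient.sound' ?_
    rw [QuotientGroup.leftRel_apply, mem_subgroupOf, coe_mul, coe_inv]
    exact QuotientGroup.eq.mp hab
  have hrange : Set.range f ⊆ QuotientGroup.mk '' F := by
    rintro _ ⟨q, rfl⟩
    induction q using Quotient.inductionOn' with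
    | h k =>
      obtain ⟨a, ha, h, hh, hk⟩ := hK k.2
      refine ⟨a, ha, QuotientGroup.eq.mpr ?_⟩
      rwa [← hk, inv_mul_cancel_left]
  have : Finite (K ⧸ H.subgroupOf K) := (Set.finite_range_iff hf).1 ((hF.image _).subset hrange)
  exact index_ne_zero_of_finite

theorem map_conj_map_conj_inv (H : Subgroup G) (g : G) :
    (H.map (MulAut.conj g⁻¹).toMonoidHom).map (MulAut.conj g).toMonoidHom = H := by
  ext x
  simp [mul_assoc]

theorem commensurable_map_conj_of_forall_relIndex_ne_zero {H : Subgroup G}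
    (hH : ∀ g : G, H.relIndex (H.map (MulAut.conj g).toMonoidHom) ≠ 0) (g : G) :
    Commensurable (H.map (MulAut.conj g).toMonoidHom) H := by
  refine ⟨?_, hH g⟩
  calc (H.map (MulAut.conj g).toMonoidHom).relIndex H
      = (H.map (MulAut.conj g).toMonoidHom).relIndex
          ((H.map (MulAut.conj g⁻¹).toMonoidHom).map (MulAut.conj g).toMonoidHom) := by
        rw [map_conj_map_conj_inv]
    _ = H.relIndex (H.map (MulAut.conj g⁻¹).toMonoidHom) :=
        relIndex_map_map_of_injective _ _ (MulAut.conj g).injective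
    _ ≠ 0 := hH g⁻¹

end Subgroup

namespace Bornology.IsBounded

variable {X Y : Type*} [PseudoMetricSpace X]

theorem image_of_dist_le_mul_add [PseudoMetricSpace Y] {s : Set Y} {f : Y → X} {K A : ℝ}
    (hs : IsBounded s) (hf : ∀ x y, dist (f x) (f y) ≤ K * dist x y + A) :
    IsBounded (f '' s) := by
  obtain ⟨C, hC⟩ := Metric.isBounded_iff.1 hs
  refine Metric.isBounded_image_iff.2 ⟨|K| * C + A, fun x hx y hy => (hf x y).trans ?_⟩
  calc K * dist x y + A ≤ |K| * dist x y + A := by gcongr; exact le_abs_self K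
    _ ≤ |K| * C + A := by gcongr; exact hC hx hy

theorem image_of_dist_le {s : Set Y} {f f' : Y → X} {C : ℝ} (hs : IsBounded (f '' s))
    (h : ∀ y ∈ s, dist (f' y) (f y) ≤ C) : IsBounded (f' '' s) := by
  refine hs.cthickening (δ := C) |>.subset ?_
  rintro _ ⟨y, hy, rfl⟩
  exact Metric.mem_cthickening_of_dist_le _ _ _ _ (Set.mem_image_of_mem f hy) (h y hy)

end Bornology.IsBounded

namespace QABounded

variable {G X : Type*} [Group G] [PseudoMetricSpace X] {K A : ℝ} {φ : G → X → X} {T : Set G}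

theorem image_mul_left (hφ : IsQuasiAction K A φ) (hT : QABounded φ T) (g : G) :
    QABounded φ ((g * ·) '' T) := by
  intro x
  rw [Set.image_image]
  have hgT : Bornology.IsBounded ((fun t => φ g (φ t x)) '' T) := by
    rw [← Set.image_image (φ g)]
    exact (hT x).image_of_dist_le_mul_add fun y z => ((hφ.1 g).1 y z).2
  exact hgT.image_of_dist_le fun t _ => by rw [dist_comm]; exact hφ.2.1 t g x

theorem image_mul_right (hφ : IsQuasiAction K A φ) (hT : QABounded φ T) (g : G) :
    QABounded φ ((· * g) '' T) := by
  intro x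
  rw [Set.image_image]
  exact (hT (φ g x)).image_of_dist_le fun t _ => by rw [dist_comm]; exact hφ.2.1 g t x

theorem map_conj (hφ : IsQuasiAction K A φ) {H : Subgroup G} (hH : QABounded φ (H : Set G))
    (g : G) : QABounded φ (H.map (MulAut.conj g).toMonoidHom : Set G) := by
  convert (hH.image_mul_right hφ g⁻¹).image_mul_left hφ g using 1
  rw [Set.image_image, Subgroup.coe_map]
  exact Set.image_congr fun t _ => by
    rw [MulEquiv.coe_toMonoidHom, MulAut.conj_apply, mul_assoc]

end QABounded

theorem coarseStabiliser_commensurated {G X : Type*} [Group G] [MetricSpace X]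
    (K A : ℝ) (φ : G → X → X) (hφ : IsQuasiAction K A φ)
    (H : Subgroup G) (hH : IsCoarseStabiliser φ H) :
    ∀ g : G, Subgroup.Commensurable (Subgroup.map (MulAut.conj g).toMonoidHom H) H := by
  refine Subgroup.commensurable_map_conj_of_forall_relIndex_ne_zero fun g => ?_
  obtain ⟨F, hF⟩ := hH.2 _ (hH.1.map_conj hφ g)
  exact Subgroup.relIndex_ne_zero_of_subset_mul F.finite_toSet hF
end

section
/- Let G be a locally compact group. Then G has a compact normal subgroup K with G/K totally disconnected if and only if G contains a compact open subgroup. -/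
open Set Filter
open scoped Pointwise Topology

/-- Variant of `TopologicalGroup.exist_mul_closure_nhd` assuming only that `W` is compact,
not that the whole group is compact. -/
lemma aux_exist_mul_closure_nhd {G : Type*} [TopologicalSpace G] [Group G] [IsTopologicalGroup G]
    {W : Set G} (Wcpt : IsCompact W) (Wopen : IsOpen W) :
    ∃ T ∈ 𝓝 (1 : G), W * T ⊆ W := by
  apply Wcpt.induction_on (p := fun S ↦ ∃ T ∈ 𝓝 (1 : G), S * T ⊆ W)
    ⟨Set.univ, by simp only [univ_mem, empty_mul, empty_subset, and_self]⟩
    (fun _ _ huv ⟨T, hT, mem⟩ ↦ ⟨T, hT, (mul_subset_mul_right huv).trans mem⟩)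
    fun U V ⟨T₁, hT₁, mem1⟩ ⟨T₂, hT₂, mem2⟩ ↦ ⟨T₁ ∩ T₂, inter_mem hT₁ hT₂, by
      rw [union_mul]
      exact union_subset (mul_subset_mul_left inter_subset_left |>.trans mem1)
        (mul_subset_mul_left inter_subset_right |>.trans mem2)⟩
  intro x memW
  have : (x, 1) ∈ (fun p : G × G ↦ p.1 * p.2) ⁻¹' W := by simp [memW]
  rcases isOpen_prod_iff.mp (continuous_mul.isOpen_preimage W Wopen) x 1 this with
    ⟨U, V, Uopen, Vopen, xmemU, onememV, prodsub⟩
  have h6 : U * V ⊆ W := mul_subset_iff.mpr (fun _ hx _ hy ↦ prodsub (mk_mem_prod hx hy))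
  exact ⟨U ∩ W, ⟨U, Uopen.mem_nhds xmemU, W, fun _ a ↦ a, rfl⟩,
    V, IsOpen.mem_nhds Vopen onememV, fun _ a ↦ h6 ((mul_subset_mul_right inter_subset_left) a)⟩

/-- van Dantzig step: any compact clopen neighbourhood of `1` contains an open subgroup. -/
lemma aux_exists_openSubgroup {G : Type*} [TopologicalSpace G] [Group G] [IsTopologicalGroup G]
    {W : Set G} (Wcpt : IsCompact W) (WClopen : IsClopen W) (einW : (1 : G) ∈ W) :
    ∃ H : Subgroup G, IsOpen (H : Set G) ∧ (H : Set G) ⊆ W := by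
  rcases aux_exist_mul_closure_nhd Wcpt WClopen.2 with ⟨S₀, Smemnhds, mulclose⟩
  rcases mem_nhds_iff.mp Smemnhds with ⟨U, UsubS, Uopen, onememU⟩
  set V : Set G := U ∩ U⁻¹ with hVdef
  have hVnhd : V ∈ 𝓝 (1 : G) := by
    simp [hVdef, Uopen.mem_nhds onememU, inv_mem_nhds_one]
  have hVinv : V⁻¹ = V := by simp [hVdef, inter_comm]
  have hVopen : IsOpen V := Uopen.inter Uopen.inv
  have hVmul : W * V ⊆ W := fun a ha ↦
    mulclose (mul_subset_mul_left UsubS (mul_subset_mul_left inter_subset_left ha))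
  let S : Subgroup G := {
    carrier := ⋃ n, V ^ (n + 1)
    mul_mem' := fun ha hb ↦ by
      rcases mem_iUnion.mp ha with ⟨k, hk⟩
      rcases mem_iUnion.mp hb with ⟨l, hl⟩
      apply mem_iUnion.mpr
      use k + 1 + l
      rw [add_assoc, pow_add]
      exact Set.mul_mem_mul hk hl
    one_mem' := by
      apply mem_iUnion.mpr
      use 0
      simp [mem_of_mem_nhds hVnhd]
    inv_mem' := fun ha ↦ by
      rcases mem_iUnion.mp ha with ⟨k, hk⟩
      apply mem_iUnion.mpr
      use k
      rw [← hVinv]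
      simpa only [inv_pow, Set.mem_inv, inv_inv] using hk }
  have hSopen : IsOpen (⋃ n, V ^ (n + 1)) := by
    refine isOpen_iUnion (fun n ↦ ?_)
    rw [pow_succ]
    exact hVopen.mul_left
  refine ⟨S, hSopen, ?_⟩
  have mulVpow (n : ℕ) : W * V ^ (n + 1) ⊆ W := by
    induction' n with n ih
    · simp [hVmul]
    · rw [pow_succ, ← mul_assoc]
      exact (Set.mul_subset_mul_right ih).trans hVmul
  have hsub (n : ℕ) : V ^ (n + 1) ⊆ W * V ^ (n + 1) := by
    intro x xin
    rw [Set.mem_mul]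
    exact ⟨1, einW, x, xin, one_mul x⟩
  exact iUnion_subset fun i a ha ↦ mulVpow i (hsub i ha)

theorem compactBy_totallyDisconnected_iff_compact_open_subgroup
    {G : Type*} [Group G] [TopologicalSpace G] [IsTopologicalGroup G]
    [LocallyCompactSpace G] :
    (∃ K : Subgroup G, K.Normal ∧ IsCompact (K : Set G) ∧
        TotallyDisconnectedSpace (G ⧸ K)) ↔
      ∃ H : Subgroup G, IsCompact (H : Set G) ∧ IsOpen (H : Set G) := by
  constructor
  · rintro ⟨K, hKnorm, hKcpt, hKtd⟩
    -- The quotient `Q := G ⧸ K` is a locally compact, Hausdorff, totally disconnected group.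
    set Q := G ⧸ K
    haveI : T2Space Q := by infer_instance
    -- find a compact clopen neighbourhood of 1 in Q
    obtain ⟨L, hLcpt, hLnhds⟩ := exists_compact_mem_nhds (1 : Q)
    have hInt : (1 : Q) ∈ interior L := mem_interior_iff_mem_nhds.2 hLnhds
    obtain ⟨W, hWclopen, hW1, hWsub⟩ :=
      (loc_compact_Haus_tot_disc_of_zero_dim (H := Q)).exists_subset_of_mem_open hInt
        isOpen_interior
    have hWcpt : IsCompact W :=
      hLcpt.of_isClosed_subset hWclopen.1 (hWsub.trans interior_subset)
    -- get an open subgroup `S ⊆ W` of `Q`; it is compact since it is closed in `W`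
    obtain ⟨S, hSopen, hSsub⟩ := aux_exists_openSubgroup hWcpt hWclopen hW1
    have hSclosed : IsClosed (S : Set Q) := S.isClosed_of_isOpen hSopen
    have hScpt : IsCompact (S : Set Q) := hWcpt.of_isClosed_subset hSclosed hSsub
    -- pull back along the quotient map
    refine ⟨S.comap (QuotientGroup.mk' K), ?_, ?_⟩
    · -- compactness of the preimage
      have hpre : ((S.comap (QuotientGroup.mk' K) : Subgroup G) : Set G)
          = (QuotientGroup.mk : G → Q) ⁻¹' (S : Set Q) := rfl
      rw [hpre]
      -- cover S by images of compact sets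
      have hcover : ∀ q ∈ (S : Set Q), ∃ C : Set G, IsCompact C ∧
          q ∈ (QuotientGroup.mk : G → Q) '' (interior C) := by
        intro q hq
        obtain ⟨g, rfl⟩ := QuotientGroup.mk_surjective q
        obtain ⟨C, hCcpt, hCnhds⟩ := exists_compact_mem_nhds g
        exact ⟨C, hCcpt, ⟨g, mem_interior_iff_mem_nhds.2 hCnhds, rfl⟩⟩
      choose C hCcpt hCmem using hcover
      have hopenim : ∀ q (hq : q ∈ (S : Set Q)),
          IsOpen ((QuotientGroup.mk : G → Q) '' (interior (C q hq))) := fun q hq ↦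
        (QuotientGroup.isOpenQuotientMap_mk (N := K)).isOpenMap _ isOpen_interior
      -- extract a finite subcover
      obtain ⟨t, hts⟩ := hScpt.elim_nhds_subcover'
        (fun q hq ↦ (QuotientGroup.mk : G → Q) '' (interior (C q hq)))
        (fun q hq ↦ (hopenim q hq).mem_nhds (hCmem q hq))
      -- the preimage is a closed subset of (⋃ finite compacts) * K
      have hbig : IsCompact ((⋃ q ∈ t, C q.1 q.2) * (K : Set G)) := by
        refine IsCompact.mul ?_ hKcpt
        exact t.isCompact_biUnion (fun q _ ↦ hCcpt q.1 q.2)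
      refine hbig.of_isClosed_subset
        (hSclosed.preimage continuous_quotient_mk') ?_
      intro a ha
      have : (QuotientGroup.mk a : Q) ∈ (S : Set Q) := ha
      obtain ⟨q, hqt, hqa⟩ := Set.mem_iUnion₂.1 (hts this)
      obtain ⟨b, hb, hba⟩ := hqa
      -- mk b = mk a, so a = b * k with k ∈ K
      have hinK : b⁻¹ * a ∈ K := QuotientGroup.eq.1 hba
      have : b * (b⁻¹ * a) ∈ (⋃ q ∈ t, C q.1 q.2) * (K : Set G) :=
        Set.mul_mem_mul (Set.mem_biUnion hqt (interior_subset hb)) hinK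
      simpa using this
    · exact hSopen.preimage continuous_quotient_mk'
  · rintro ⟨H, hHcpt, hHopen⟩
    -- Take K to be the normal core of H.
    refine ⟨H.normalCore, H.normalCore_normal, ?_, ?_⟩
    · -- the normal core is a closed subset of the compact H
      have hHclosed : IsClosed (H : Set G) := H.isClosed_of_isOpen hHopen
      have hcoreclosed : IsClosed (H.normalCore : Set G) := by
        have : (H.normalCore : Set G) = ⋂ g : G, (fun x ↦ g * x * g⁻¹) ⁻¹' (H : Set G) := by
          ext a
          simp only [SetLike.mem_coe, Set.mem_iInter, Set.mem_preimage]
          exact Iff.rfl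
        rw [this]
        exact isClosed_iInter fun g ↦
          hHclosed.preimage (by continuity)
      exact hHcpt.of_isClosed_subset hcoreclosed H.normalCore_le
    · -- total disconnectedness of the quotient
      set K := H.normalCore
      haveI : K.Normal := H.normalCore_normal
      set Q := G ⧸ K
      -- the connected component of 1 is trivial
      have hcomp1 : connectedComponent (1 : Q) ⊆ {1} := by
        intro x hx
        obtain ⟨a, rfl⟩ := QuotientGroup.mk_surjective x
        have key : ∀ g : G, g * a * g⁻¹ ∈ H := by
          intro g
          -- the image in Q of the conjugate subgroup is a clopen subgroup
          set Hg : Subgroup G := H.comap ((MulAut.conj g).toMonoidHom)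
          have hHgK : K ≤ Hg := by
            intro k hk
            have : g * k * g⁻¹ ∈ K := (H.normalCore_normal).conj_mem k hk g
            exact H.normalCore_le this
          have hHgopen : IsOpen (Hg : Set G) := by
            have : (Hg : Set G) = (fun x ↦ g * x * g⁻¹) ⁻¹' (H : Set G) := rfl
            rw [this]
            exact hHopen.preimage (by continuity)
          set Qg : Subgroup Q := Hg.map (QuotientGroup.mk' K)
          have hQgopen : IsOpen (Qg : Set Q) := by
            have : (Qg : Set Q) = (QuotientGroup.mk : G → Q) '' (Hg : Set G) := rfl
            rw [this]
            exact (QuotientGroup.isOpenQuotientMap_mk (N := K)).isOpenMap _ hHgopen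
          have hQgclopen : IsClopen (Qg : Set Q) :=
            ⟨Qg.isClosed_of_isOpen hQgopen, hQgopen⟩
          have hmem : (QuotientGroup.mk a : Q) ∈ (Qg : Set Q) :=
            hQgclopen.connectedComponent_subset Qg.one_mem hx
          obtain ⟨h, hh, hha⟩ := hmem
          have hinK : h⁻¹ * a ∈ K := QuotientGroup.eq.1 hha
          have : a ∈ Hg := by
            have := Hg.mul_mem hh (hHgK hinK)
            simpa using this
          simpa [Hg, Subgroup.mem_comap] using this
        have : a ∈ K := key
        simpa [Q] using (QuotientGroup.eq_one_iff a).2 this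
      rw [totallyDisconnectedSpace_iff_connectedComponent_subsingleton]
      intro x y hy z hz
      have h1 : x⁻¹ * y ∈ connectedComponent (1 : Q) := by
        have := (continuous_mul_left x⁻¹).image_connectedComponent_subset x
        have hmem : x⁻¹ * y ∈ (x⁻¹ * ·) '' connectedComponent x := ⟨y, hy, rfl⟩
        simpa using this hmem
      have h2 : x⁻¹ * z ∈ connectedComponent (1 : Q) := by
        have := (continuous_mul_left x⁻¹).image_connectedComponent_subset x
        have hmem : x⁻¹ * z ∈ (x⁻¹ * ·) '' connectedComponent x := ⟨z, hz, rfl⟩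
        simpa using this hmem
      have e1 : x⁻¹ * y = 1 := hcomp1 h1
      have e2 : x⁻¹ * z = 1 := hcomp1 h2
      have ey : x = y := inv_mul_eq_one.mp e1
      have ez : x = z := inv_mul_eq_one.mp e2
      rw [← ey, ← ez]
end

section
/- Let X be a first countable regular topological space, S a set, and ρ : S → X a map. Let 𝒞 be the set of sequences (s_i) in S such that (ρ(s_i)) converges in X, and Λ : 𝒞 → X the limit map. Suppose x ∈ X and for each j ∈ ℕ we have c_j = (s_{i,j})_{i=1}^∞ ∈ 𝒞. Then (Λ(c_j))_{j=1}^∞ converges to x if and only if there is a function μ : ℕ → ℕ such that for every κ : ℕ → ℕ with κ(j) ≥ μ(j) for all j, the diagonal sequence (ρ(s_{κ(j),j}))_{j=1}^∞ converges to x. -/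
/-!
Fix a countable basis `U₀, U₁, …` of open neighbourhoods of `x`. Choose `μ j` so that from row
`μ j` on, the `j`-th column lies in every `U k` with `k ≤ j` that contains its limit `l j`; once
`l j ∈ U k` and `j ≥ k`, every admissible diagonal term then lies in `U k`. Conversely, if `l j`
avoids a closed neighbourhood `C` of `x` infinitely often, then for each such `j` the column
eventually avoids `C` as well, so some admissible diagonal leaves `C` infinitely often; since
closed neighbourhoods form a basis in a regular space, this gives convergence of `l`.
-/

open Filter Topology Set

theorem exists_forall_le_tendsto_diag_of_tendsto {X : Type*} [TopologicalSpace X] {x : X}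
    [(𝓝 x).IsCountablyGenerated] {f : ℕ → ℕ → X} {l : ℕ → X}
    (hf : ∀ j, Tendsto (fun i => f i j) atTop (𝓝 (l j))) (hl : Tendsto l atTop (𝓝 x)) :
    ∃ μ : ℕ → ℕ, ∀ κ : ℕ → ℕ, (∀ j, μ j ≤ κ j) →
      Tendsto (fun j => f (κ j) j) atTop (𝓝 x) := by
  obtain ⟨U, hU, hbasis⟩ := (nhds_basis_opens x).exists_antitone_subbasis
  have hcol : ∀ j, ∀ᶠ i in atTop, ∀ k ∈ Iic j, l j ∈ U k → f i j ∈ U k := fun j =>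
    (finite_Iic j).eventually_all.2 fun k _ =>
      eventually_imp_distrib_left.2 fun hk => hf j ((hU k).2.mem_nhds hk)
  choose μ hμ using fun j => eventually_atTop.1 (hcol j)
  refine ⟨μ, fun κ hκ => hbasis.toHasBasis.tendsto_right_iff.2 fun k _ => ?_⟩
  filter_upwards [hl (hbasis.mem k), eventually_ge_atTop k] with j hlj hkj
  exact hμ j (κ j) (hκ j) k hkj hlj

theorem tendsto_of_forall_le_tendsto_diag {X : Type*} [TopologicalSpace X] [RegularSpace X]
    {x : X} {f : ℕ → ℕ → X} {l : ℕ → X} {μ : ℕ → ℕ}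
    (hf : ∀ j, Tendsto (fun i => f i j) atTop (𝓝 (l j)))
    (hμ : ∀ κ : ℕ → ℕ, (∀ j, μ j ≤ κ j) → Tendsto (fun j => f (κ j) j) atTop (𝓝 x)) :
    Tendsto l atTop (𝓝 x) := by
  refine (closed_nhds_basis x).tendsto_right_iff.2 fun C ⟨hC, hCclosed⟩ => ?_
  have hcol : ∀ j, ∃ i ≥ μ j, l j ∉ C → f i j ∉ C := fun j =>
    ((eventually_ge_atTop (μ j)).and <| eventually_imp_distrib_left.2 fun hj =>
      hf j (hCclosed.isOpen_compl.mem_nhds hj)).exists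
  choose κ hκμ hκ using hcol
  filter_upwards [hμ κ hκμ hC] with j hj
  exact not_imp_not.1 (hκ j) hj

theorem diagonal_convergence {X S : Type*} [TopologicalSpace X]
    [FirstCountableTopology X] [RegularSpace X]
    (ρ : S → X) (s : ℕ → ℕ → S) (l : ℕ → X)
    (hl : ∀ j : ℕ, Filter.Tendsto (fun i : ℕ => ρ (s i j)) Filter.atTop (nhds (l j)))
    (x : X) :
    Filter.Tendsto l Filter.atTop (nhds x) ↔
      ∃ μ : ℕ → ℕ, ∀ κ : ℕ → ℕ, (∀ j : ℕ, μ j ≤ κ j) →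
        Filter.Tendsto (fun j : ℕ => ρ (s (κ j) j)) Filter.atTop (nhds x) :=
  ⟨exists_forall_le_tendsto_diag_of_tendsto hl,
    fun ⟨_, hμ⟩ => tendsto_of_forall_le_tendsto_diag hl hμ⟩
end

section
/- Let Γ be a finitely generated group acting cocompactly by isometries on a proper metric space X = X₁ × X₂ (with the product metric), preserving the product structure without permuting factors, where X₂ is a connected locally finite graph on which Γ acts by graph automorphisms. Fix a vertex v of X₂ and let Γ₁ = {g ∈ Γ : g stabilises X₁ × {v}}. Then Γ₁ acts cocompactly on X₁ × {v}, and Γ₁ is commensurated in Γ. -/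
/-- Lemma: if a finitely generated group acts cocompactly by isometries on a
proper metric space `X₁ × V`, preserving the product structure without
permuting factors, where `V` is a connected locally finite graph (with the
graph metric) acted on by graph automorphisms, then the stabiliser `Γ₁` of a
slice `X₁ × {v}` acts cocompactly on it and is commensurated in `Γ`. -/
theorem slice_stabiliser_cocompact_and_commensurated
    {X₁ V : Type*} [MetricSpace X₁] [MetricSpace V]
    (Γg : SimpleGraph V) (hconn : Γg.Connected)
    (hlf : ∀ u : V, (Γg.neighborSet u).Finite)
    (hdist : ∀ u w : V, dist u w = (Γg.dist u w : ℝ))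
    [ProperSpace (X₁ × V)]
    {Γ : Type*} [Group Γ] [MulAction Γ X₁] [MulAction Γ V]
    (hfg : Group.FG Γ)
    (hiso : ∀ g : Γ, Isometry (fun x : X₁ => g • x))
    (hgraph : ∀ (g : Γ) (u w : V), Γg.Adj (g • u) (g • w) ↔ Γg.Adj u w)
    (hcocompact : ∃ K : Set (X₁ × V), IsCompact K ∧
      ∀ p : X₁ × V, ∃ g : Γ, ∃ q ∈ K, (g • q.1, g • q.2) = p)
    (v : V) :
    (∃ L : Set X₁, IsCompact L ∧
        ∀ x : X₁, ∃ g ∈ MulAction.stabilizer Γ v, ∃ y ∈ L, g • y = x) ∧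
      ∀ g : Γ, Subgroup.Commensurable
        (Subgroup.map (MulAut.conj g).toMonoidHom (MulAction.stabilizer Γ v))
        (MulAction.stabilizer Γ v) := by
  classical
  -- balls in the graph metric are finite
  have hball : ∀ (n : ℕ) (u : V), {w : V | Γg.dist u w ≤ n}.Finite := by
    intro n
    induction n with
    | zero =>
      intro u
      refine (Set.finite_singleton u).subset ?_
      intro w hw
      simp only [Set.mem_setOf_eq, Nat.le_zero] at hw
      simp [(hconn.dist_eq_zero_iff.mp hw).symm]
    | succ n ih =>
      intro u
      have hsub : {w : V | Γg.dist u w ≤ n + 1} ⊆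
          {w : V | Γg.dist u w ≤ n} ∪ ⋃ z ∈ {w : V | Γg.dist u w ≤ n}, Γg.neighborSet z := by
        intro w hw
        simp only [Set.mem_setOf_eq] at hw
        rcases le_or_gt (Γg.dist u w) n with h | h
        · exact Or.inl h
        · have hd : Γg.dist u w = n + 1 := le_antisymm hw h
          obtain ⟨p, hp⟩ := hconn.exists_walk_length_eq_dist u w
          have hq := p.reverse
          cases hq' : p.reverse with
          | nil =>
            exfalso
            have : p.reverse.length = n + 1 := by rw [SimpleGraph.Walk.length_reverse, hp, hd]
            rw [hq'] at this
            simp at this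
          | cons hadj q =>
            rename_i z
            right
            refine Set.mem_biUnion (x := z) ?_ ?_
            · have hlen : q.length = n := by
                have : p.reverse.length = n + 1 := by
                  rw [SimpleGraph.Walk.length_reverse, hp, hd]
                rw [hq'] at this
                simpa using this
              have : Γg.dist u z ≤ q.reverse.length := Γg.dist_le q.reverse
              rw [SimpleGraph.Walk.length_reverse, hlen] at this
              exact this
            · exact hadj.symm
      exact ((ih u).union ((ih u).biUnion fun z _ => hlf z)).subset hsub
  -- the action preserves the graph distance
  have hdsmul : ∀ (g : Γ) (u w : V), Γg.dist (g • u) (g • w) = Γg.dist u w := by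
    have hle : ∀ (g : Γ) (u w : V), Γg.dist (g • u) (g • w) ≤ Γg.dist u w := by
      intro g u w
      obtain ⟨p, hp⟩ := hconn.exists_walk_length_eq_dist u w
      let f : Γg →g Γg := ⟨fun z => g • z, fun ha => (hgraph g _ _).mpr ha⟩
      have := Γg.dist_le (p.map f)
      rwa [SimpleGraph.Walk.length_map, hp] at this
    intro g u w
    refine le_antisymm (hle g u w) ?_
    have := hle g⁻¹ (g • u) (g • w)
    simpa using this
  -- the key finite-index fact
  have hrel : ∀ u w : V,
      (MulAction.stabilizer Γ u).relIndex (MulAction.stabilizer Γ w) ≠ 0 := by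
    intro u w
    have hst : (MulAction.stabilizer Γ u).subgroupOf (MulAction.stabilizer Γ w)
        = MulAction.stabilizer (MulAction.stabilizer Γ w) u := by
      ext h
      simp [Subgroup.mem_subgroupOf, MulAction.mem_stabilizer_iff, Subgroup.smul_def]
    rw [Subgroup.relIndex, hst, MulAction.index_stabilizer]
    have horb : MulAction.orbit (MulAction.stabilizer Γ w) u ⊆
        {z : V | Γg.dist w z ≤ Γg.dist w u} := by
      rintro z ⟨h, rfl⟩
      have : Γg.dist ((h : Γ) • w) ((h : Γ) • u) = Γg.dist w u := hdsmul _ _ _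
      rw [h.2] at this
      simp only [Set.mem_setOf_eq]
      rw [Subgroup.smul_def, this]
    have hfin : (MulAction.orbit (MulAction.stabilizer Γ w) u).Finite :=
      (hball (Γg.dist w u) w).subset horb
    have hne : (MulAction.orbit (MulAction.stabilizer Γ w) u).Nonempty :=
      ⟨u, MulAction.mem_orbit_self u⟩
    exact ((Set.ncard_pos hfin).mpr hne).ne'
  constructor
  · -- cocompactness of the slice stabiliser
    obtain ⟨K, hK, hKcov⟩ := hcocompact
    have hK₁ : IsCompact (Prod.fst '' K) := hK.image continuous_fst
    have hF : IsCompact (Prod.snd '' K) := hK.image continuous_snd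
    -- the projection of K to V is finite
    have hFfin : (Prod.snd '' K).Finite := by
      obtain ⟨r, hr⟩ := hF.isBounded.subset_closedBall v
      refine (hball ⌈r⌉₊ v).subset ?_
      intro w hw
      have h1 : dist w v ≤ r := hr hw
      rw [dist_comm, hdist] at h1
      have h2 : (Γg.dist v w : ℝ) ≤ (⌈r⌉₊ : ℝ) := h1.trans (Nat.le_ceil r)
      exact_mod_cast h2
    set φ : V → Γ := fun u => if h : ∃ g : Γ, g • u = v then h.choose else 1 with hφ
    refine ⟨⋃ u ∈ Prod.snd '' K, (fun y => φ u • y) '' (Prod.fst '' K),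
      hFfin.isCompact_biUnion fun u _ => hK₁.image (hiso (φ u)).continuous, ?_⟩
    intro x
    obtain ⟨g, q, hqK, heq⟩ := hKcov (x, v)
    have h1 : g • q.1 = x := congrArg Prod.fst heq
    have h2 : g • q.2 = v := congrArg Prod.snd heq
    have hex : ∃ g' : Γ, g' • q.2 = v := ⟨g, h2⟩
    have hφv : φ q.2 • q.2 = v := by
      rw [hφ]; simp only [dif_pos hex]; exact hex.choose_spec
    refine ⟨g * (φ q.2)⁻¹, ?_, φ q.2 • q.1, ?_, ?_⟩
    · rw [MulAction.mem_stabilizer_iff, mul_smul, ← hφv, inv_smul_smul, h2]; exact hφv.symm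
    · exact Set.mem_biUnion ⟨q, hqK, rfl⟩ ⟨q.1, ⟨q, hqK, rfl⟩, rfl⟩
    · rw [mul_smul, inv_smul_smul, h1]
  · -- commensuration
    intro g
    rw [← MulAction.stabilizer_smul_eq_stabilizer_map_conj]
    exact ⟨hrel (g • v) v, hrel v (g • v)⟩
end

section
/- Let G be a group acting on itself by left multiplication with respect to a word metric d_S for a finite generating set S, and let a ∈ G be a central element. Then the left translation L_a(g) = ag satisfies d_S(L_a(g), g) = |a|_S for all g ∈ G; in particular L_a is an isometry of (G, d_S) at uniformly bounded distance from the identity. Consequently, if the centre of G is infinite, then G (with any word metric from a finite generating set) is not tame. -/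
/-- The word norm of `g` with respect to a generating set `S`: the least `n`
such that `g` is a product of `n` elements of `S ∪ S⁻¹`. -/
noncomputable def wordNorm {G : Type*} [Group G] (S : Set G) (g : G) : ℕ :=
  sInf {n : ℕ | ∃ l : List G, l.length = n ∧ (∀ x ∈ l, x ∈ S ∨ x⁻¹ ∈ S) ∧ l.prod = g}

/-- The (left-invariant) word metric on `G`, as a real-valued distance. -/
noncomputable def wordDist {G : Type*} [Group G] (S : Set G) (g h : G) : ℝ :=
  (wordNorm S (g⁻¹ * h) : ℝ)


private lemma wordNorm_aux {G : Type*} [Group G] (S : Set G) (g : G) (n : ℕ)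
    (h : ∃ l : List G, l.length = n ∧ (∀ x ∈ l, x ∈ S ∨ x⁻¹ ∈ S) ∧ l.prod = g) :
    ∃ l : List G, l.length = n ∧ (∀ x ∈ l, x ∈ S ∨ x⁻¹ ∈ S) ∧ l.prod = g⁻¹ := by
  obtain ⟨l, hlen, hmem, hp⟩ := h
  refine ⟨(l.map Inv.inv).reverse, by simp [hlen], ?_, ?_⟩
  · intro x hx
    simp only [List.mem_reverse, List.mem_map] at hx
    obtain ⟨y, hy, rfl⟩ := hx
    rcases hmem y hy with h | h
    · exact Or.inr (by simpa using h)
    · exact Or.inl h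
  · rw [← List.prod_inv_reverse, hp]

private lemma wordNorm_inv' {G : Type*} [Group G] (S : Set G) (g : G) :
    wordNorm S g⁻¹ = wordNorm S g := by
  unfold wordNorm
  congr 1
  ext n
  constructor
  · intro h
    simpa using wordNorm_aux S g⁻¹ n h
  · exact wordNorm_aux S g n

private lemma wordNorm_one' {G : Type*} [Group G] (S : Set G) : wordNorm S 1 = 0 :=
  Nat.eq_zero_of_le_zero (Nat.sInf_le ⟨[], rfl, by simp, rfl⟩)

private lemma ball_finite {G : Type*} [Group G] (S : Finset G) (n : ℕ) :
    {g : G | ∃ l : List G, l.length ≤ n ∧ (∀ x ∈ l, x ∈ (S : Set G) ∨ x⁻¹ ∈ (S : Set G)) ∧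
      l.prod = g}.Finite := by
  induction n with
  | zero =>
      apply Set.Finite.subset (Set.finite_singleton (1 : G))
      rintro g ⟨l, hlen, -, rfl⟩
      simp [List.length_eq_zero_iff.mp (Nat.le_zero.mp hlen)]
  | succ n ih =>
      have hT : ((S : Set G) ∪ (S : Set G)⁻¹).Finite :=
        S.finite_toSet.union S.finite_toSet.inv
      apply Set.Finite.subset (ih.union (Set.Finite.image2 (· * ·) hT ih))
      rintro g ⟨l, hlen, hmem, rfl⟩
      cases l with
      | nil => exact Or.inl ⟨[], by simp, by simp, rfl⟩
      | cons x l =>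
          refine Or.inr (Set.mem_image2_of_mem ?_ ⟨l, ?_, fun y hy => hmem y (by simp [hy]), rfl⟩)
          · rcases hmem x (by simp) with h | h
            · exact Or.inl h
            · exact Or.inr (by simpa using h)
          · simp only [List.length_cons] at hlen; omega

theorem tst : True := trivial


private lemma wordDist_mul_left {G : Type*} [Group G] (S : Set G) (b g h : G) :
    wordDist S (b * g) (b * h) = wordDist S g h := by
  unfold wordDist
  rw [show (b * g)⁻¹ * (b * h) = g⁻¹ * h by group]

private lemma wordDist_central {G : Type*} [Group G] (S : Set G) (b : G)
    (hb : ∀ g : G, b * g = g * b) (x : G) :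
    wordDist S (b * x) x = (wordNorm S b⁻¹ : ℝ) := by
  have hc : Commute b x := hb x
  unfold wordDist
  rw [mul_inv_rev, mul_assoc, hc.inv_left.eq, ← mul_assoc]
  simp

/-- `f` is a `(K,A)`-quasi-isometry with respect to a distance function `d`. -/
def IsQuasiIsometryWith {G : Type*} (d : G → G → ℝ) (K A : ℝ) (f : G → G) : Prop :=
  (∀ x x' : G, d x x' / K - A ≤ d (f x) (f x') ∧ d (f x) (f x') ≤ K * d x x' + A) ∧
    ∀ y : G, ∃ x : G, d y (f x) ≤ A

/-- Tameness of a space with distance function `d`: self quasi-isometries at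
finite distance from the identity are uniformly close to the identity. -/
def TameWith {G : Type*} (d : G → G → ℝ) : Prop :=
  ∀ K A : ℝ, 1 ≤ K → 0 ≤ A → ∃ B : ℝ, ∀ f : G → G, IsQuasiIsometryWith d K A f →
    (∃ C : ℝ, ∀ x : G, d (f x) x ≤ C) → ∀ x : G, d (f x) x ≤ B

theorem central_translation_close_to_identity {G : Type*} [Group G]
    (S : Finset G) (hgen : Subgroup.closure (S : Set G) = ⊤)
    (a : G) (ha : ∀ g : G, a * g = g * a) :
    (∀ g : G, wordDist (S : Set G) (a * g) g = (wordNorm (S : Set G) a : ℝ)) ∧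
      (∀ g h : G, wordDist (S : Set G) (a * g) (a * h) = wordDist (S : Set G) g h) ∧
      ((Subgroup.center G : Set G).Infinite →
        ∀ S' : Finset G, Subgroup.closure (S' : Set G) = ⊤ →
          ¬ TameWith (wordDist (S' : Set G))) := by
  refine ⟨fun g => ?_, fun g h => wordDist_mul_left _ a g h, ?_⟩
  · rw [wordDist_central _ a ha g, wordNorm_inv']
  · intro hinf S' hgen' htame
    obtain ⟨B, hB⟩ := htame 1 0 le_rfl le_rfl
    have hex : ∀ g : G, {m : ℕ | ∃ l : List G, l.length = m ∧
        (∀ x ∈ l, x ∈ (S' : Set G) ∨ x⁻¹ ∈ (S' : Set G)) ∧ l.prod = g}.Nonempty := by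
      intro g
      have hg : g ∈ Subgroup.closure (S' : Set G) := hgen' ▸ Subgroup.mem_top g
      have hg' : g ∈ Submonoid.closure ((S' : Set G) ∪ (S' : Set G)⁻¹) := by
        rw [← Subgroup.closure_toSubmonoid]; exact hg
      obtain ⟨l, hl, hp⟩ := Submonoid.exists_list_of_mem_closure hg'
      refine ⟨l.length, l, rfl, fun x hx => ?_, hp⟩
      rcases hl x hx with h | h
      · exact Or.inl h
      · exact Or.inr (by simpa using h)
    have key : ∀ b ∈ Subgroup.center G, (wordNorm (S' : Set G) b⁻¹ : ℝ) ≤ B := by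
      intro b hb
      have hbc : ∀ g : G, b * g = g * b := fun g => (Subgroup.mem_center_iff.mp hb g).symm
      have hqi : IsQuasiIsometryWith (wordDist (S' : Set G)) 1 0 (fun x => b * x) := by
        constructor
        · intro x x'
          rw [wordDist_mul_left]
          constructor <;> simp
        · intro y
          exact ⟨b⁻¹ * y, by simp [wordDist, wordNorm_one', mul_inv_cancel_left]⟩
      have hbd : ∃ C : ℝ, ∀ x : G, wordDist (S' : Set G) (b * x) x ≤ C :=
        ⟨(wordNorm (S' : Set G) b⁻¹ : ℝ), fun x => le_of_eq (wordDist_central _ b hbc x)⟩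
      have := hB (fun x => b * x) hqi hbd 1
      rwa [wordDist_central _ b hbc 1] at this
    set n : ℕ := ⌊B⌋₊ with hn
    have hsub : (Subgroup.center G : Set G) ⊆
        (fun g : G => g⁻¹) ⁻¹' {g : G | ∃ l : List G, l.length ≤ n ∧
          (∀ x ∈ l, x ∈ (S' : Set G) ∨ x⁻¹ ∈ (S' : Set G)) ∧ l.prod = g} := by
      intro b hb
      have h1 : wordNorm (S' : Set G) b⁻¹ ≤ n := Nat.le_floor (key b hb)
      obtain ⟨l, hlen, hmem, hp⟩ := Nat.sInf_mem (hex b⁻¹)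
      exact ⟨l, hlen ▸ h1, hmem, hp⟩
    have hfin : ((fun g : G => g⁻¹) ⁻¹' {g : G | ∃ l : List G, l.length ≤ n ∧
        (∀ x ∈ l, x ∈ (S' : Set G) ∨ x⁻¹ ∈ (S' : Set G)) ∧ l.prod = g}).Finite :=
      Set.Finite.preimage (Set.injOn_of_injective inv_injective) (ball_finite S' n)
    exact (hinf.mono hsub) hfin
end
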